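/- Every word of length n over the alphabet {A, C, G} such that every contiguous window of length m contains an A is m-SSA over the DNA alphabet D = {A,T,C,G}. -/

import Mathlib

inductive Base : Type
  | A | T | C | G
deriving DecidableEq, Repr

open Base

def bcompl : Base → Base
  | A => T
  | T => A
  | C => G
  | G => C

/-- Reverse-complement of a DNA word. -/
def RC (w : List Base) : List Base := w.reverse.map bcompl

/-- The contiguous factor of `x` starting at index `i` of length `k`. -/
def factor (x : List Base) (i k : ℕ) : List Base := (x.drop i).take k

/-- `x` is `m`-SSA: for all `k ≥ m` there is no pair of non-overlapping
contiguous factors of length `k`, one the reverse-complement of the other. -/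
def SSA (m : ℕ) (x : List Base) : Prop :=
  ∀ k, m ≤ k → ∀ i j, i + k ≤ x.length → j + k ≤ x.length →
    (i + k ≤ j ∨ j + k ≤ i) → factor x i k ≠ RC (factor x j k)

theorem bcompl_mem_RC {b : Base} {w : List Base} (h : b ∈ w) : bcompl b ∈ RC w :=
  List.mem_map_of_mem (List.mem_reverse.2 h)

theorem factor_subset (x : List Base) (i k : ℕ) : factor x i k ⊆ x :=
  List.Subset.trans (List.take_subset _ _) (List.drop_subset _ _)

theorem factor_subset_factor_of_le (x : List Base) (j : ℕ) {m k : ℕ} (hmk : m ≤ k) :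
    factor x j m ⊆ factor x j k := by
  have : factor x j m = (factor x j k).take m := by
    simp only [factor, List.take_take, Nat.min_eq_left hmk]
  rw [this]
  exact List.take_subset _ _

theorem stmt5_general (m : ℕ) (x : List Base)
    (hnoT : Base.T ∉ x)
    (hwin : ∀ i, i + m ≤ x.length → Base.A ∈ factor x i m) :
    SSA m x := by
  intro k hmk i j _ hjk _ heq
  have hA : Base.A ∈ factor x j k :=
    factor_subset_factor_of_le x j hmk (hwin j (by omega))
  have hT : Base.T ∈ factor x i k := heq ▸ bcompl_mem_RC hA
  exact hnoT (factor_subset x i k hT)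

theorem stmt5 (n m : ℕ) (x : List Base) (hlen : x.length = n)
    (hnoT : Base.T ∉ x)
    (hwin : ∀ i, i + m ≤ x.length → Base.A ∈ factor x i m) :
    SSA m x :=
  stmt5_general m x hnoT hwin
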